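/- For every realization of the 2^2 split-plot assignment, with 1̂_ht = diag(1̂_ht(z))_{z∈T} and rows/columns ordered (0,0),(0,1),(1,0),(1,1): the cluster-robust covariance of the 'wls' unit regression satisfies Ṽ_wls = 1̂_ht^{-1}·diag(((W_0−1)/W_0)·I_2, ((W_1−1)/W_1)·I_2)·V̂_haj·1̂_ht^{-1}, and the cluster-robust covariance of the 'ag' aggregate regression satisfies Ṽ_ag = diag(((W_0−1)/W_0)·I_2, ((W_1−1)/W_1)·I_2)·V̂_ht. -/

import Mathlib

open Finset Matrix Filter
open scoped Classical BigOperators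

noncomputable section

namespace SplitPlotPaper

/-- The set of treatment combinations `T = {0,1} × {0,1}`, a pair of the levels of
factor A and factor B. -/
abbrev T : Type := Bool × Bool

section LS

variable {ι κ γ : Type*} [Fintype ι] [Fintype κ] [DecidableEq κ] [Fintype γ] [DecidableEq γ]

/-- The Gram matrix `Dᵀ Π D` of a (weighted) least-squares problem with design matrix `X`
and weights `π`. -/
def gram (X : Matrix ι κ ℝ) (π : ι → ℝ) : Matrix κ κ ℝ :=
  Matrix.of fun k k' => ∑ i, π i * X i k * X i k'

/-- The (weighted) least-squares coefficient vector `(DᵀΠD)⁻¹ DᵀΠY`. -/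
def lsCoef (X : Matrix ι κ ℝ) (π y : ι → ℝ) : κ → ℝ :=
  (gram X π)⁻¹.mulVec fun k => ∑ i, π i * X i k * y i

/-- Residuals of the (weighted) least-squares fit. -/
def lsResid (X : Matrix ι κ ℝ) (π y : ι → ℝ) (i : ι) : ℝ :=
  y i - ∑ k, X i k * lsCoef X π y k

/-- The cluster-robust covariance matrix
`(DᵀΠD)⁻¹ (Σ_c D_cᵀΠ_c e_c e_cᵀ Π_c D_c) (DᵀΠD)⁻¹` for clustering map `c`. -/
def clusterCov (X : Matrix ι κ ℝ) (π y : ι → ℝ) (c : ι → γ) : Matrix κ κ ℝ :=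
  (gram X π)⁻¹ *
    (Matrix.of fun k k' =>
      ∑ g : γ, (∑ i, if c i = g then π i * X i k * lsResid X π y i else 0) *
        (∑ i, if c i = g then π i * X i k' * lsResid X π y i else 0)) *
    (gram X π)⁻¹

/-- The heteroskedasticity-robust (sandwich) covariance matrix. -/
def hcCov (X : Matrix ι κ ℝ) (π y : ι → ℝ) : Matrix κ κ ℝ :=
  (gram X π)⁻¹ *
    (Matrix.of fun k k' => ∑ i, (π i) ^ 2 * (lsResid X π y i) ^ 2 * X i k * X i k') *
    (gram X π)⁻¹

end LS

/-- A `2²` split-plot design: `W = W0 + W1` whole-plots, whole-plot `w` containing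
`M w = M0 w + M1 w` sub-plots, together with fixed potential outcomes `Y`. -/
structure Design where
  W0 : ℕ
  W1 : ℕ
  hW0 : 2 ≤ W0
  hW1 : 2 ≤ W1
  M0 : Fin (W0 + W1) → ℕ
  M1 : Fin (W0 + W1) → ℕ
  hM0 : ∀ w, 2 ≤ M0 w
  hM1 : ∀ w, 2 ≤ M1 w
  Y : (w : Fin (W0 + W1)) → Fin (M0 w + M1 w) → T → ℝ

namespace Design

variable (d : Design)

/-- Number of whole-plots. -/
abbrev W : ℕ := d.W0 + d.W1

/-- Size of whole-plot `w`. -/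
abbrev M (w : Fin d.W) : ℕ := d.M0 w + d.M1 w

/-- Total number of units. -/
def N : ℕ := ∑ w, d.M w

/-- Number of whole-plots assigned level `a` of factor A. -/
def Wa (a : Bool) : ℕ := if a then d.W1 else d.W0

/-- Number of units of whole-plot `w` assigned level `b` of factor B. -/
def Mb (w : Fin d.W) (b : Bool) : ℕ := if b then d.M1 w else d.M0 w

/-- `p_a = W_a / W`. -/
def p (a : Bool) : ℝ := (d.Wa a : ℝ) / (d.W : ℝ)

/-- `q_{wb} = M_{wb} / M_w`. -/
def q (w : Fin d.W) (b : Bool) : ℝ := (d.Mb w b : ℝ) / (d.M w : ℝ)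

/-- Inclusion probability `p_{ws}(z) = p_a q_{wb}` for `z = (a,b)`. -/
def prob (w : Fin d.W) (z : T) : ℝ := d.p z.1 * d.q w z.2

/-- Whole-plot size factor `α_w = W M_w / N`. -/
def alpha (w : Fin d.W) : ℝ := (d.W : ℝ) * (d.M w : ℝ) / (d.N : ℝ)

/-- An assignment: a level of factor A for each whole-plot and a level of factor B
for each unit. -/
abbrev Assign : Type := (Fin d.W → Bool) × ((w : Fin d.W) → Fin (d.M w) → Bool)

/-- The set of assignments realizable under split-plot randomization: exactly `W1`
whole-plots receive level 1 of factor A, and exactly `M1 w` units of whole-plot `w`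
receive level 1 of factor B.  Split-plot randomization is uniform on this set. -/
def Ω : Finset d.Assign :=
  Finset.univ.filter fun ω =>
    ((Finset.univ.filter fun w => ω.1 w = true).card = d.W1) ∧
    (∀ w, (Finset.univ.filter fun s => ω.2 w s = true).card = d.M1 w)

/-- Design-based expectation: average over the uniform distribution on `Ω`. -/
def expect (f : d.Assign → ℝ) : ℝ := (∑ ω ∈ d.Ω, f ω) / (d.Ω.card : ℝ)

/-- Design-based covariance. -/
def cov (f g : d.Assign → ℝ) : ℝ :=
  d.expect (fun ω => f ω * g ω) - d.expect f * d.expect g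

/-- Conditional expectation given an event `E` on assignments. -/
def cexpect (E : d.Assign → Prop) (f : d.Assign → ℝ) : ℝ :=
  (∑ ω ∈ d.Ω.filter E, f ω) / ((d.Ω.filter E).card : ℝ)

/-- Conditional covariance given an event `E` on assignments. -/
def ccov (E : d.Assign → Prop) (f g : d.Assign → ℝ) : ℝ :=
  d.cexpect E (fun ω => f ω * g ω) - d.cexpect E f * d.cexpect E g

/-- Treatment `Z_{ws} = (A_w, B_{ws})` received by unit `(w,s)`. -/
def Z (ω : d.Assign) (w : Fin d.W) (s : Fin (d.M w)) : T := (ω.1 w, ω.2 w s)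

/-- Observed outcome `Y_{ws} = Y_{ws}(Z_{ws})`. -/
def Yobs (ω : d.Assign) (w : Fin d.W) (s : Fin (d.M w)) : ℝ := d.Y w s (d.Z ω w s)

/-- Horvitz–Thompson estimator `Ŷ_ht(z)`. -/
def Yht (ω : d.Assign) (z : T) : ℝ :=
  (d.N : ℝ)⁻¹ * ∑ w, ∑ s, if d.Z ω w s = z then (d.prob w z)⁻¹ * d.Yobs ω w s else 0

/-- `1̂_ht(z)`: the Horvitz–Thompson estimator of the constant 1. -/
def oneHt (ω : d.Assign) (z : T) : ℝ :=
  (d.N : ℝ)⁻¹ * ∑ w, ∑ s, if d.Z ω w s = z then (d.prob w z)⁻¹ else 0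

/-- Hajek estimator `Ŷ_haj(z) = Ŷ_ht(z)/1̂_ht(z)`. -/
def Yhaj (ω : d.Assign) (z : T) : ℝ := d.Yht ω z / d.oneHt ω z

/-- Sample-mean estimator `Ŷ_sm(z)`. -/
def Ysm (ω : d.Assign) (z : T) : ℝ :=
  (∑ w, ∑ s, if d.Z ω w s = z then d.Yobs ω w s else 0) /
    (∑ w, ∑ s, if d.Z ω w s = z then (1 : ℝ) else 0)

/-- Whole-plot sample mean `Ŷ_w(z)` (zero when whole-plot `w` has no units under `z`). -/
def Yw (ω : d.Assign) (w : Fin d.W) (z : T) : ℝ :=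
  (d.Mb w z.2 : ℝ)⁻¹ * ∑ s, if d.Z ω w s = z then d.Yobs ω w s else 0

/-- Scaled whole-plot sample mean `Û_w(z) = α_w Ŷ_w(z)`. -/
def Uw (ω : d.Assign) (w : Fin d.W) (z : T) : ℝ := d.alpha w * d.Yw ω w z

/-- Finite-population average `Ȳ(z)`. -/
def Ybar (z : T) : ℝ := (d.N : ℝ)⁻¹ * ∑ w, ∑ s, d.Y w s z

/-- Whole-plot average potential outcome `Ȳ_w(z)`. -/
def Ybarw (w : Fin d.W) (z : T) : ℝ := (d.M w : ℝ)⁻¹ * ∑ s, d.Y w s z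

/-- Scaled whole-plot total `U_w(z) = α_w Ȳ_w(z)`. -/
def U (w : Fin d.W) (z : T) : ℝ := d.alpha w * d.Ybarw w z

/-- Between whole-plot covariance `S_ht(z,z')`. -/
def Sht (z z' : T) : ℝ :=
  ((d.W : ℝ) - 1)⁻¹ *
    ∑ w, (d.alpha w * d.Ybarw w z - d.Ybar z) * (d.alpha w * d.Ybarw w z' - d.Ybar z')

/-- Between whole-plot covariance `S_haj(z,z')`. -/
def Shaj (z z' : T) : ℝ :=
  ((d.W : ℝ) - 1)⁻¹ *
    ∑ w, (d.alpha w) ^ 2 * (d.Ybarw w z - d.Ybar z) * (d.Ybarw w z' - d.Ybar z')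

/-- Within whole-plot covariance `S_w(z,z')`. -/
def Sw (w : Fin d.W) (z z' : T) : ℝ :=
  ((d.M w : ℝ) - 1)⁻¹ * (d.alpha w) ^ 2 *
    ∑ s, (d.Y w s z - d.Ybarw w z) * (d.Y w s z' - d.Ybarw w z')

/-- Entry `(z,z')` of `H = diag(p₀⁻¹,p₁⁻¹) ⊗ J₂ − J₄`. -/
def Hmat (z z' : T) : ℝ := (if z.1 = z'.1 then (d.p z.1)⁻¹ else 0) - 1

/-- Entry `(z,z')` of `H_w = diag(p₀⁻¹,p₁⁻¹) ⊗ (diag(q_{w0}⁻¹,q_{w1}⁻¹) − J₂)`,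
i.e. `1(a=a')·p_a⁻¹·(q_{wb}⁻¹·1(z=z') − 1)`. -/
def Hw (w : Fin d.W) (z z' : T) : ℝ :=
  if z.1 = z'.1 then (d.p z.1)⁻¹ * ((if z = z' then (d.q w z.2)⁻¹ else 0) - 1) else 0

/-- `Ψ(z,z') = W⁻¹ Σ_w M_w⁻¹ H_w(z,z') S_w(z,z')`. -/
def Psi (z z' : T) : ℝ := (d.W : ℝ)⁻¹ * ∑ w, (d.M w : ℝ)⁻¹ * d.Hw w z z' * d.Sw w z z'

/-- Sample analog `Ŝ_ht(z,z')` (for `z,z'` sharing the same A-level `z.1`). -/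
def ShtHat (ω : d.Assign) (z z' : T) : ℝ :=
  ((d.Wa z.1 : ℝ) - 1)⁻¹ *
    ∑ w, if ω.1 w = z.1 then
        (d.alpha w * d.Yw ω w z - d.Yht ω z) * (d.alpha w * d.Yw ω w z' - d.Yht ω z')
      else 0

/-- Sample analog `Ŝ_haj(z,z')` (for `z,z'` sharing the same A-level `z.1`). -/
def ShajHat (ω : d.Assign) (z z' : T) : ℝ :=
  ((d.Wa z.1 : ℝ) - 1)⁻¹ *
    ∑ w, if ω.1 w = z.1 then
        (d.alpha w) ^ 2 * (d.Yw ω w z - d.Yhaj ω z) * (d.Yw ω w z' - d.Yhaj ω z')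
      else 0

/-- Covariance estimator `V̂_ht` (block-diagonal in the A-levels). -/
def Vht (ω : d.Assign) : Matrix T T ℝ :=
  Matrix.of fun z z' => if z.1 = z'.1 then (d.Wa z.1 : ℝ)⁻¹ * d.ShtHat ω z z' else 0

/-- Covariance estimator `V̂_haj` (block-diagonal in the A-levels). -/
def Vhaj (ω : d.Assign) : Matrix T T ℝ :=
  Matrix.of fun z z' => if z.1 = z'.1 then (d.Wa z.1 : ℝ)⁻¹ * d.ShajHat ω z z' else 0

/-- Index set of units. -/
abbrev Idx : Type := (w : Fin d.W) × Fin (d.M w)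

/-- Design matrix of the unit regression on the four treatment indicators. -/
def Dunit (ω : d.Assign) : Matrix d.Idx T ℝ :=
  Matrix.of fun i z => if d.Z ω i.1 i.2 = z then 1 else 0

/-- Observed outcome vector, indexed by units. -/
def Yv (ω : d.Assign) : d.Idx → ℝ := fun i => d.Yobs ω i.1 i.2

/-- Inverse-probability weights `p_{ws}(Z_{ws})⁻¹`. -/
def wgt (ω : d.Assign) : d.Idx → ℝ := fun i => (d.prob i.1 (d.Z ω i.1 i.2))⁻¹

/-- Index set of the aggregate regression: pairs `(w,b)`. -/
abbrev AgIdx : Type := Fin d.W × Bool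

/-- Design matrix of the aggregate regression on the four treatment indicators. -/
def Dag (ω : d.Assign) : Matrix d.AgIdx T ℝ :=
  Matrix.of fun i z => if (ω.1 i.1, i.2) = z then 1 else 0

/-- Outcome vector of the aggregate regression: `Û_w((A_w, b))`. -/
def Uag (ω : d.Assign) : d.AgIdx → ℝ := fun i => d.Uw ω i.1 (ω.1 i.1, i.2)

/-- Clustering of units by whole-plot. -/
def clUnit : d.Idx → Fin d.W := fun i => i.1

/-- Clustering of aggregate observations by whole-plot. -/
def clAg : d.AgIdx → Fin d.W := fun i => i.1

/-- OLS coefficients `β_ols` of the unit regression. -/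
def betaOls (ω : d.Assign) : T → ℝ := lsCoef (d.Dunit ω) (fun _ => 1) (d.Yv ω)

/-- WLS coefficients `β_wls` of the unit regression with inverse probability weights. -/
def betaWls (ω : d.Assign) : T → ℝ := lsCoef (d.Dunit ω) (d.wgt ω) (d.Yv ω)

/-- OLS coefficients `β_ag` of the aggregate regression. -/
def betaAg (ω : d.Assign) : T → ℝ := lsCoef (d.Dag ω) (fun _ => 1) (d.Uag ω)

/-- Cluster-robust covariance `Ṽ_ols` of the unweighted unit regression. -/
def Vols (ω : d.Assign) : Matrix T T ℝ :=
  clusterCov (d.Dunit ω) (fun _ => 1) (d.Yv ω) d.clUnit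

/-- Cluster-robust covariance `Ṽ_wls` of the weighted unit regression. -/
def Vwls (ω : d.Assign) : Matrix T T ℝ :=
  clusterCov (d.Dunit ω) (d.wgt ω) (d.Yv ω) d.clUnit

/-- Cluster-robust covariance `Ṽ_ag` of the aggregate regression. -/
def VagCR (ω : d.Assign) : Matrix T T ℝ :=
  clusterCov (d.Dag ω) (fun _ => 1) (d.Uag ω) d.clAg

section Covariates

variable {J : ℕ}

/-- Horvitz–Thompson estimator of the covariate means. -/
def xht (x : (w : Fin d.W) → Fin (d.M w) → Fin J → ℝ) (ω : d.Assign) (z : T) (j : Fin J) : ℝ :=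
  (d.N : ℝ)⁻¹ * ∑ w, ∑ s, if d.Z ω w s = z then (d.prob w z)⁻¹ * x w s j else 0

/-- Hajek estimator of the covariate means. -/
def xhaj (x : (w : Fin d.W) → Fin (d.M w) → Fin J → ℝ) (ω : d.Assign) (z : T) (j : Fin J) : ℝ :=
  d.xht x ω z j / d.oneHt ω z

/-- Sample-mean estimator of the covariate means. -/
def xsm (x : (w : Fin d.W) → Fin (d.M w) → Fin J → ℝ) (ω : d.Assign) (z : T) (j : Fin J) : ℝ :=
  (∑ w, ∑ s, if d.Z ω w s = z then x w s j else 0) /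
    (∑ w, ∑ s, if d.Z ω w s = z then (1 : ℝ) else 0)

/-- Whole-plot sample mean of the covariates `x̂_w(z)`. -/
def xw (x : (w : Fin d.W) → Fin (d.M w) → Fin J → ℝ) (ω : d.Assign) (w : Fin d.W) (z : T)
    (j : Fin J) : ℝ :=
  (d.Mb w z.2 : ℝ)⁻¹ * ∑ s, if d.Z ω w s = z then x w s j else 0

/-- Scaled whole-plot covariate total `v̂_w(z) = α_w x̂_w(z)`. -/
def vw (x : (w : Fin d.W) → Fin (d.M w) → Fin J → ℝ) (ω : d.Assign) (w : Fin d.W) (z : T)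
    (j : Fin J) : ℝ :=
  d.alpha w * d.xw x ω w z j

/-- Design matrix of the additive covariate-adjusted unit regression. -/
def DunitF (x : (w : Fin d.W) → Fin (d.M w) → Fin J → ℝ) (ω : d.Assign) :
    Matrix d.Idx (T ⊕ Fin J) ℝ :=
  Matrix.of fun i k =>
    Sum.elim (fun z => if d.Z ω i.1 i.2 = z then (1 : ℝ) else 0) (fun j => x i.1 i.2 j) k

/-- Design matrix of the additive covariate-adjusted aggregate regression. -/
def DagF (x : (w : Fin d.W) → Fin (d.M w) → Fin J → ℝ) (ω : d.Assign) :
    Matrix d.AgIdx (T ⊕ Fin J) ℝ :=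
  Matrix.of fun i k =>
    Sum.elim (fun z => if (ω.1 i.1, i.2) = z then (1 : ℝ) else 0)
      (fun j => d.vw x ω i.1 (ω.1 i.1, i.2) j) k

/-- Design matrix of the fully-interacted covariate-adjusted unit regression. -/
def DunitL (x : (w : Fin d.W) → Fin (d.M w) → Fin J → ℝ) (ω : d.Assign) :
    Matrix d.Idx (T ⊕ T × Fin J) ℝ :=
  Matrix.of fun i k =>
    Sum.elim (fun z => if d.Z ω i.1 i.2 = z then (1 : ℝ) else 0)
      (fun zj => if d.Z ω i.1 i.2 = zj.1 then x i.1 i.2 zj.2 else 0) k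

/-- Design matrix of the fully-interacted covariate-adjusted aggregate regression. -/
def DagL (x : (w : Fin d.W) → Fin (d.M w) → Fin J → ℝ) (ω : d.Assign) :
    Matrix d.AgIdx (T ⊕ T × Fin J) ℝ :=
  Matrix.of fun i k =>
    Sum.elim (fun z => if (ω.1 i.1, i.2) = z then (1 : ℝ) else 0)
      (fun zj => if (ω.1 i.1, i.2) = zj.1 then d.vw x ω i.1 (ω.1 i.1, i.2) zj.2 else 0) k

end Covariates

/-- Centered factor-A indicator `A_w − 1/2`. -/
def Ac (ω : d.Assign) (w : Fin d.W) : ℝ := (if ω.1 w then 1 else 0) - 1 / 2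

/-- Centered factor-B indicator `B_{ws} − 1/2`. -/
def Bcu (ω : d.Assign) (i : d.Idx) : ℝ := (if ω.2 i.1 i.2 then 1 else 0) - 1 / 2

/-- Design matrix of the factor-based unit regression
`Y ~ 1 + (A−1/2) + (B−1/2) + (A−1/2)(B−1/2)`. -/
def Funit (ω : d.Assign) : Matrix d.Idx (Fin 4) ℝ :=
  Matrix.of fun i => ![1, d.Ac ω i.1, d.Bcu ω i, d.Ac ω i.1 * d.Bcu ω i]

/-- Design matrix of the factor-based aggregate regression
`Û ~ 1 + (A−1/2) + (b−1/2) + (A−1/2)(b−1/2)`. -/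
def Fag (ω : d.Assign) : Matrix d.AgIdx (Fin 4) ℝ :=
  Matrix.of fun i =>
    ![1, d.Ac ω i.1, (if i.2 then 1 else 0) - 1 / 2,
      d.Ac ω i.1 * ((if i.2 then 1 else 0) - 1 / 2)]

end Design

/-- The contrast matrix `G₀` with rows `g_A`, `g_B`, `g_AB`. -/
def G0 : Matrix (Fin 3) T ℝ :=
  Matrix.of fun k z =>
    ![(if z.1 then (1 : ℝ) else -1) / 2,
      (if z.2 then (1 : ℝ) else -1) / 2,
      (if z.1 then (-1 : ℝ) else 1) * (if z.2 then (-1 : ℝ) else 1)] k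

/-!
Both regressions are on the four treatment indicators, so their design is one-hot: the Gram
matrix is diagonal with the total weight of each treatment group on the diagonal, the fitted
coefficients are the weighted group means (the Hajek means for `wls`, the Horvitz–Thompson means
for `ag`), and each residual is a deviation from its group mean. Entry `(z, z')` of the
cluster-robust covariance is therefore `n_z⁻¹ n_{z'}⁻¹ Σ_w s_w(z) s_w(z')` with cluster scores
`s_w(z)`. Under split-plot randomization whole-plot `w` contributes to `s_w(z)` only when
`A_w = z.1`, and then `s_w(z)` is a fixed multiple of `α_w Ŷ_w(z)` minus the estimated mean.
So the score products cancel across A-levels, and within A-level `a` they sum to `(W_a - 1)`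
times the sample covariance `Ŝ(z, z')`.
-/

theorem sum_sigma_ite_fst_eq_and {ι M : Type*} {α : ι → Type*} [Fintype ι] [DecidableEq ι]
    [∀ i, Fintype (α i)] [AddCommMonoid M] (j : ι) (P : Sigma α → Prop) [DecidablePred P]
    (f : Sigma α → M) :
    ∑ x, (if x.1 = j ∧ P x then f x else 0) = ∑ a : α j, if P ⟨j, a⟩ then f ⟨j, a⟩ else 0 := by
  rw [Fintype.sum_sigma, Finset.sum_eq_single j]
  · simp
  · exact fun i _ hij => Finset.sum_eq_zero fun a _ => if_neg fun h => hij h.1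
  · simp

theorem sum_prod_ite_fst_eq_and {α β M : Type*} [Fintype α] [Fintype β] [DecidableEq α]
    [AddCommMonoid M] (j : α) (P : α × β → Prop) [DecidablePred P] (f : α × β → M) :
    ∑ x : α × β, (if x.1 = j ∧ P x then f x else 0) = ∑ b, if P (j, b) then f (j, b) else 0 := by
  rw [Fintype.sum_prod_type, Finset.sum_eq_single j]
  · simp
  · exact fun i _ hij => Finset.sum_eq_zero fun b _ => if_neg fun h => hij h.1
  · simp

theorem sum_ite_prod_mk_eq {α β M : Type*} [Fintype β] [DecidableEq α] [DecidableEq β]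
    [AddCommMonoid M] (a : α) (z : α × β) (f : α × β → M) :
    ∑ b, (if (a, b) = z then f (a, b) else 0) = if a = z.1 then f z else 0 := by
  obtain ⟨a', b'⟩ := z
  by_cases h : a = a' <;> simp [h]

theorem sum_ite_mul_ite {γ α R : Type*} [Fintype γ] [DecidableEq α] [NonUnitalNonAssocSemiring R]
    (A : γ → α) (a a' : α) (f g : γ → R) :
    ∑ w, (if A w = a then f w else 0) * (if A w = a' then g w else 0) =
      if a = a' then ∑ w, (if A w = a then f w * g w else 0) else 0 := by
  split_ifs with h
  · subst h
    exact Finset.sum_congr rfl fun w _ => by split_ifs <;> simp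
  · refine Finset.sum_eq_zero fun w _ => ?_
    split_ifs with h₁ h₂ <;> first | exact absurd (h₁.symm.trans h₂) h | simp

theorem card_filter_eq_false_add_card_filter_eq_true {α : Type*} [Fintype α] (f : α → Bool) :
    #{x | f x = false} + #{x | f x = true} = Fintype.card α := by
  simpa [add_comm] using Finset.card_filter_add_card_filter_not (s := Finset.univ) (f · = true)

theorem inv_diagonal_of_ne_zero {κ K : Type*} [Fintype κ] [DecidableEq κ] [Field K]
    {v : κ → K} (hv : ∀ k, v k ≠ 0) : (Matrix.diagonal v)⁻¹ = Matrix.diagonal fun k => (v k)⁻¹ :=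
  Matrix.inv_eq_right_inv <| by
    rw [Matrix.diagonal_mul_diagonal, ← Matrix.diagonal_one]
    exact congrArg _ (funext fun k => mul_inv_cancel₀ (hv k))

section OneHot

variable {ι κ γ : Type*} [Fintype ι] [DecidableEq κ]

def oneHot (cat : ι → κ) : Matrix ι κ ℝ :=
  Matrix.of fun i k => if cat i = k then 1 else 0

def groupWeight (cat : ι → κ) (π : ι → ℝ) (k : κ) : ℝ :=
  ∑ i, if cat i = k then π i else 0

def groupMean (cat : ι → κ) (π y : ι → ℝ) (k : κ) : ℝ :=
  (groupWeight cat π k)⁻¹ * ∑ i, if cat i = k then π i * y i else 0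

def clusterScore [DecidableEq γ] (cat : ι → κ) (π y : ι → ℝ) (c : ι → γ) (g : γ) (k : κ) : ℝ :=
  ∑ i, if c i = g ∧ cat i = k then π i * (y i - groupMean cat π y k) else 0

theorem gram_oneHot (cat : ι → κ) (π : ι → ℝ) :
    gram (oneHot cat) π = Matrix.diagonal (groupWeight cat π) := by
  ext k k'
  simp only [gram, oneHot, Matrix.of_apply, Matrix.diagonal_apply, groupWeight]
  split_ifs with h
  · subst h
    exact Finset.sum_congr rfl fun i _ => by split_ifs <;> ring
  · refine Finset.sum_eq_zero fun i _ => ?_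
    split_ifs with h₁ h₂ <;> first | exact absurd (h₁.symm.trans h₂) h | ring

theorem groupWeight_pos {cat : ι → κ} {π : ι → ℝ} (hπ : ∀ i, 0 < π i) {k : κ}
    (hk : ∃ i, cat i = k) : 0 < groupWeight cat π k := by
  obtain ⟨i, hi⟩ := hk
  refine Finset.sum_pos' (fun j _ => ?_) ⟨i, Finset.mem_univ _, by rw [if_pos hi]; exact hπ i⟩
  split_ifs
  exacts [(hπ j).le, le_rfl]

variable [Fintype κ] {cat : ι → κ} {π : ι → ℝ}

theorem lsCoef_oneHot (hπ : ∀ k, groupWeight cat π k ≠ 0) (y : ι → ℝ) :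
    lsCoef (oneHot cat) π y = groupMean cat π y := by
  ext k
  rw [lsCoef, gram_oneHot, inv_diagonal_of_ne_zero hπ, Matrix.mulVec_diagonal]
  refine congrArg _ (Finset.sum_congr rfl fun i _ => ?_)
  simp only [oneHot, Matrix.of_apply]
  split_ifs <;> ring

theorem lsResid_oneHot (hπ : ∀ k, groupWeight cat π k ≠ 0) (y : ι → ℝ) (i : ι) :
    lsResid (oneHot cat) π y i = y i - groupMean cat π y (cat i) := by
  rw [lsResid, lsCoef_oneHot hπ]
  simp only [oneHot, Matrix.of_apply, ite_mul, one_mul, zero_mul, Finset.sum_ite_eq,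
    Finset.mem_univ, if_true]

theorem clusterCov_oneHot_apply [Fintype γ] [DecidableEq γ] (hπ : ∀ k, groupWeight cat π k ≠ 0)
    (y : ι → ℝ) (c : ι → γ) (k k' : κ) :
    clusterCov (oneHot cat) π y c k k' =
      (groupWeight cat π k)⁻¹ *
        (∑ g, clusterScore cat π y c g k * clusterScore cat π y c g k') *
        (groupWeight cat π k')⁻¹ := by
  have score (g k) : (∑ i, if c i = g then π i * oneHot cat i k * lsResid (oneHot cat) π y i
      else 0) = clusterScore cat π y c g k :=
    Finset.sum_congr rfl fun i _ => by
      rw [lsResid_oneHot hπ, ite_and]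
      simp only [oneHot, Matrix.of_apply]
      split_ifs with h₁ h₂ <;> first | subst h₂; ring | ring
  simp only [clusterCov, gram_oneHot, inv_diagonal_of_ne_zero hπ, Matrix.mul_diagonal,
    Matrix.diagonal_mul, Matrix.of_apply, score]

end OneHot

namespace Design

variable (d : Design)

theorem two_le_Wa (a : Bool) : 2 ≤ d.Wa a := by
  cases a
  exacts [d.hW0, d.hW1]

theorem Wa_cast_ne_zero (a : Bool) : (d.Wa a : ℝ) ≠ 0 := by
  exact_mod_cast ((d.two_le_Wa a).trans_lt' two_pos).ne'

theorem Wa_cast_sub_one_ne_zero (a : Bool) : (d.Wa a : ℝ) - 1 ≠ 0 := by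
  have : (2 : ℝ) ≤ d.Wa a := by exact_mod_cast d.two_le_Wa a
  linarith

theorem W_pos : 0 < d.W := Nat.add_pos_left (d.hW0.trans_lt' two_pos) _

theorem Mb_pos (w : Fin d.W) (b : Bool) : 0 < d.Mb w b := by
  cases b
  exacts [(d.hM0 w).trans_lt' two_pos, (d.hM1 w).trans_lt' two_pos]

theorem M_pos (w : Fin d.W) : 0 < d.M w := Nat.add_pos_left (d.Mb_pos w false) _

theorem N_pos : 0 < d.N :=
  Finset.sum_pos (fun w _ => d.M_pos w) ⟨⟨0, d.W_pos⟩, Finset.mem_univ _⟩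

theorem N_cast_ne_zero : (d.N : ℝ) ≠ 0 := by exact_mod_cast d.N_pos.ne'

theorem prob_pos (w : Fin d.W) (z : T) : 0 < d.prob w z := by
  have hWa : (0 : ℝ) < d.Wa z.1 := by exact_mod_cast (d.two_le_Wa z.1).trans_lt' two_pos
  have hW : (0 : ℝ) < d.W := by exact_mod_cast d.W_pos
  have hMb : (0 : ℝ) < d.Mb w z.2 := by exact_mod_cast d.Mb_pos w z.2
  have hM : (0 : ℝ) < d.M w := by exact_mod_cast d.M_pos w
  exact mul_pos (div_pos hWa hW) (div_pos hMb hM)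

theorem inv_prob_mul_Mb (w : Fin d.W) (z : T) :
    (d.prob w z)⁻¹ * d.Mb w z.2 = d.N / d.Wa z.1 * d.alpha w := by
  have := d.Mb_pos w z.2
  have := d.N_cast_ne_zero
  simp only [prob, p, q, alpha]
  field_simp

variable {d} {ω : d.Assign}

theorem card_filter_fst_eq (hω : ω ∈ d.Ω) (a : Bool) : #{w | ω.1 w = a} = d.Wa a := by
  have h := (Finset.mem_filter.mp hω).2.1
  have := card_filter_eq_false_add_card_filter_eq_true ω.1
  cases a <;> simp only [Wa, Fintype.card_fin, W, Bool.false_eq_true, if_false, if_true] at * <;>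
    omega

theorem card_filter_snd_eq (hω : ω ∈ d.Ω) (w : Fin d.W) (b : Bool) :
    #{s | ω.2 w s = b} = d.Mb w b := by
  have h := (Finset.mem_filter.mp hω).2.2 w
  have := card_filter_eq_false_add_card_filter_eq_true (ω.2 w)
  cases b <;> simp only [Mb, Fintype.card_fin, M, Bool.false_eq_true, if_false, if_true] at * <;>
    omega

theorem exists_Z_eq (hω : ω ∈ d.Ω) (z : T) : ∃ i : d.Idx, d.Z ω i.1 i.2 = z := by
  have hA : 0 < #{w | ω.1 w = z.1} :=
    card_filter_fst_eq hω z.1 ▸ (d.two_le_Wa z.1).trans_lt' two_pos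
  obtain ⟨w, hw⟩ := Finset.card_pos.mp hA
  have hB : 0 < #{s | ω.2 w s = z.2} := card_filter_snd_eq hω w z.2 ▸ d.Mb_pos w z.2
  obtain ⟨s, hs⟩ := Finset.card_pos.mp hB
  exact ⟨⟨w, s⟩, Prod.ext (Finset.mem_filter.mp hw).2 (Finset.mem_filter.mp hs).2⟩

theorem Yw_eq_zero_of_ne {w : Fin d.W} {z : T} (h : ω.1 w ≠ z.1) : d.Yw ω w z = 0 := by
  rw [Yw, Finset.sum_eq_zero fun s _ => if_neg fun hz => h (congrArg Prod.fst hz), mul_zero]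

theorem sum_ite_Z_eq_Mb_mul_Yw (w : Fin d.W) (z : T) :
    ∑ s, (if d.Z ω w s = z then d.Yobs ω w s else 0) = d.Mb w z.2 * d.Yw ω w z := by
  rw [Yw, ← mul_assoc, mul_inv_cancel₀ (by exact_mod_cast (d.Mb_pos w z.2).ne'), one_mul]

theorem Yht_eq (z : T) : d.Yht ω z = (d.Wa z.1 : ℝ)⁻¹ * ∑ w, d.alpha w * d.Yw ω w z := by
  have := d.N_cast_ne_zero
  simp_rw [Yht, ← mul_ite_zero, ← Finset.mul_sum, sum_ite_Z_eq_Mb_mul_Yw, ← mul_assoc,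
    inv_prob_mul_Mb, Finset.mul_sum]
  refine Finset.sum_congr rfl fun w _ => ?_
  field_simp

theorem Dunit_eq_oneHot : d.Dunit ω = oneHot fun i : d.Idx => d.Z ω i.1 i.2 := rfl

theorem Dag_eq_oneHot : d.Dag ω = oneHot fun i : d.AgIdx => (ω.1 i.1, i.2) := rfl

theorem groupWeight_wls (z : T) :
    groupWeight (fun i : d.Idx => d.Z ω i.1 i.2) (d.wgt ω) z = d.N * d.oneHt ω z := by
  rw [oneHt, ← mul_assoc, mul_inv_cancel₀ d.N_cast_ne_zero, one_mul, groupWeight,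
    Fintype.sum_sigma]
  refine Finset.sum_congr rfl fun w _ => Finset.sum_congr rfl fun s _ => ?_
  split_ifs with h
  · rw [wgt, h]
  · rfl

theorem groupWeight_wls_ne_zero (hω : ω ∈ d.Ω) (z : T) :
    groupWeight (fun i : d.Idx => d.Z ω i.1 i.2) (d.wgt ω) z ≠ 0 :=
  (groupWeight_pos (fun _ => inv_pos.mpr (d.prob_pos _ _)) (exists_Z_eq hω z)).ne'

theorem groupMean_wls (z : T) :
    groupMean (fun i : d.Idx => d.Z ω i.1 i.2) (d.wgt ω) (d.Yv ω) z = d.Yhaj ω z := by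
  have hsum : ∑ i : d.Idx, (if d.Z ω i.1 i.2 = z then d.wgt ω i * d.Yv ω i else 0) =
      d.N * d.Yht ω z := by
    rw [Yht, ← mul_assoc, mul_inv_cancel₀ d.N_cast_ne_zero, one_mul,
      Fintype.sum_sigma]
    refine Finset.sum_congr rfl fun w _ => Finset.sum_congr rfl fun s _ => ?_
    split_ifs with h
    · rw [wgt, Yv, h]
    · rfl
  rw [groupMean, groupWeight_wls, hsum, Yhaj, _root_.mul_inv_rev, mul_assoc,
    inv_mul_cancel_left₀ d.N_cast_ne_zero, div_eq_inv_mul]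

theorem clusterScore_wls (hω : ω ∈ d.Ω) (w : Fin d.W) (z : T) :
    clusterScore (fun i : d.Idx => d.Z ω i.1 i.2) (d.wgt ω) (d.Yv ω) d.clUnit w z =
      if ω.1 w = z.1 then d.N / d.Wa z.1 * (d.alpha w * (d.Yw ω w z - d.Yhaj ω z)) else 0 := by
  simp only [clusterScore, groupMean_wls, clUnit]
  rw [sum_sigma_ite_fst_eq_and w (fun i => d.Z ω i.1 i.2 = z)
    (fun i => d.wgt ω i * (d.Yv ω i - d.Yhaj ω z))]
  split_ifs with hA
  · have hcount : ∑ s, (if d.Z ω w s = z then (1 : ℝ) else 0) = d.Mb w z.2 := by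
      rw [Finset.sum_boole, ← card_filter_snd_eq hω w z.2]
      congr 2
      exact Finset.filter_congr fun s _ => by simp [Z, Prod.ext_iff, hA]
    have hterm (s : Fin (d.M w)) : (if d.Z ω w s = z then d.wgt ω ⟨w, s⟩ *
          (d.Yv ω ⟨w, s⟩ - d.Yhaj ω z) else 0) = (d.prob w z)⁻¹ *
          ((if d.Z ω w s = z then d.Yobs ω w s else 0) - d.Yhaj ω z *
            (if d.Z ω w s = z then 1 else 0)) := by
      split_ifs with h
      · rw [wgt, Yv, h]; ring
      · ring
    rw [Finset.sum_congr rfl fun s _ => hterm s, ← Finset.mul_sum, Finset.sum_sub_distrib,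
      ← Finset.mul_sum, sum_ite_Z_eq_Mb_mul_Yw, hcount, mul_comm (d.Yhaj ω z), ← mul_sub,
      ← mul_assoc, inv_prob_mul_Mb, mul_assoc]
  · exact Finset.sum_eq_zero fun s _ => if_neg fun hz => hA (congrArg Prod.fst hz)

theorem groupWeight_ag (hω : ω ∈ d.Ω) (z : T) :
    groupWeight (fun i : d.AgIdx => (ω.1 i.1, i.2)) (fun _ => 1) z = d.Wa z.1 := by
  rw [groupWeight, Fintype.sum_prod_type]
  simp_rw [fun w => sum_ite_prod_mk_eq (ω.1 w) z (fun _ => (1 : ℝ))]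
  rw [Finset.sum_boole, card_filter_fst_eq hω]

theorem groupMean_ag (hω : ω ∈ d.Ω) (z : T) :
    groupMean (fun i : d.AgIdx => (ω.1 i.1, i.2)) (fun _ => 1) (d.Uag ω) z = d.Yht ω z := by
  rw [groupMean, groupWeight_ag hω, Yht_eq, Fintype.sum_prod_type]
  refine congrArg _ (Finset.sum_congr rfl fun w _ => ?_)
  refine (sum_ite_prod_mk_eq (ω.1 w) z fun z => 1 * d.Uw ω w z).trans ?_
  split_ifs with hA
  · rw [one_mul, Uw]
  · rw [Yw_eq_zero_of_ne hA, mul_zero]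

theorem clusterScore_ag (hω : ω ∈ d.Ω) (w : Fin d.W) (z : T) :
    clusterScore (fun i : d.AgIdx => (ω.1 i.1, i.2)) (fun _ => 1) (d.Uag ω) d.clAg w z =
      if ω.1 w = z.1 then d.alpha w * d.Yw ω w z - d.Yht ω z else 0 := by
  simp only [clusterScore, groupMean_ag hω, clAg]
  rw [sum_prod_ite_fst_eq_and w (fun i => (ω.1 i.1, i.2) = z)
    (fun i => 1 * (d.Uag ω i - d.Yht ω z))]
  exact (sum_ite_prod_mk_eq (ω.1 w) z fun z' => 1 * (d.Uw ω w z' - d.Yht ω z)).trans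
    (by rw [one_mul, Uw])

theorem Vwls_eq (hω : ω ∈ d.Ω) :
    d.Vwls ω =
      (Matrix.diagonal fun z : T => d.oneHt ω z)⁻¹ *
        ((Matrix.diagonal fun z : T => ((d.Wa z.1 : ℝ) - 1) / (d.Wa z.1 : ℝ)) *
          (d.Vhaj ω * (Matrix.diagonal fun z : T => d.oneHt ω z)⁻¹)) := by
  have ho (z : T) : d.oneHt ω z ≠ 0 :=
    right_ne_zero_of_mul (groupWeight_wls z ▸ groupWeight_wls_ne_zero hω z)
  ext ⟨a, b⟩ ⟨a', b'⟩
  rw [Vwls, Dunit_eq_oneHot, clusterCov_oneHot_apply (groupWeight_wls_ne_zero hω),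
    inv_diagonal_of_ne_zero ho]
  simp only [clusterScore_wls hω, groupWeight_wls, sum_ite_mul_ite, Matrix.diagonal_mul,
    Matrix.mul_diagonal, Vhaj, Matrix.of_apply]
  split_ifs with h
  · subst h
    have := d.N_cast_ne_zero
    have := d.Wa_cast_sub_one_ne_zero a
    have hterm (w : Fin d.W) (x x' : ℝ) :
        (if ω.1 w = a then d.N / d.Wa a * (d.alpha w * x) * (d.N / d.Wa a * (d.alpha w * x'))
          else 0) = (d.N / d.Wa a) ^ 2 * if ω.1 w = a then d.alpha w ^ 2 * x * x' else 0 := by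
      split_ifs <;> ring
    simp only [ShajHat, hterm, ← Finset.mul_sum]
    field_simp
  · simp

theorem VagCR_eq (hω : ω ∈ d.Ω) :
    d.VagCR ω =
      (Matrix.diagonal fun z : T => ((d.Wa z.1 : ℝ) - 1) / (d.Wa z.1 : ℝ)) * d.Vht ω := by
  ext ⟨a, b⟩ ⟨a', b'⟩
  rw [VagCR, Dag_eq_oneHot,
    clusterCov_oneHot_apply fun z => groupWeight_ag hω z ▸ d.Wa_cast_ne_zero z.1]
  simp only [clusterScore_ag hω, groupWeight_ag hω, sum_ite_mul_ite, Matrix.diagonal_mul,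
    Vht, Matrix.of_apply]
  split_ifs with h
  · subst h
    have := d.Wa_cast_sub_one_ne_zero a
    simp only [ShtHat]
    field_simp
  · simp

end Design

/-- For every realization of the 2² split-plot assignment, with
`1̂_ht = diag(1̂_ht(z))` and rows/columns ordered by `z ∈ T`:
`Ṽ_wls = 1̂_ht⁻¹ · diag(((W₀−1)/W₀)I₂, ((W₁−1)/W₁)I₂) · V̂_haj · 1̂_ht⁻¹` and
`Ṽ_ag = diag(((W₀−1)/W₀)I₂, ((W₁−1)/W₁)I₂) · V̂_ht`. -/
theorem cluster_robust_identities (d : Design) :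
    ∀ ω ∈ d.Ω,
      d.Vwls ω =
        (Matrix.diagonal fun z : T => d.oneHt ω z)⁻¹ *
          ((Matrix.diagonal fun z : T => ((d.Wa z.1 : ℝ) - 1) / (d.Wa z.1 : ℝ)) *
            (d.Vhaj ω * (Matrix.diagonal fun z : T => d.oneHt ω z)⁻¹)) ∧
      d.VagCR ω =
        (Matrix.diagonal fun z : T => ((d.Wa z.1 : ℝ) - 1) / (d.Wa z.1 : ℝ)) * d.Vht ω :=
  fun _ hω => ⟨Design.Vwls_eq hω, Design.VagCR_eq hω⟩

end SplitPlotPaper
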